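/- Let d ≥ 3, q ≥ (5d)^5 be integers and β ≥ β_c. With t ≥ (q−1)^{2/d} defined from e^β−1 = (t−1)(t^{d−1}+q−1)/(t^{d−1}−t), φ̂₁ = t^{−(d−2)}, and R = (t^{d+1}+(q−2)t^d−(q−1)t)/((t^d−t)(t^{d−1}+q−1)), it holds that √φ̂₁ + R < 1/(d−1)^5. -/

import Mathlib

/-!
Put `y = (q - 1)^{1/d}`, so that `t ≥ y²` and `q - 1 = y^d`, and let `w = y^{-(d-2)}`.
Cross-multiplying, `R ≤ (t + q - 1)/(t^{d-1} + q - 1)` because `t ≤ t^{d-1}`, hence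
`R ≤ t^{-(d-2)} + (q - 1) t^{-(d-1)} ≤ w² + w`, while `√φ̂₁ ≤ w`. The hypothesis
`q ≥ (5d)^5` yields `(q - 1)^{d-2} ≥ (5/2)^d (d-1)^{5d}`, i.e. `w ≤ 2/(5 (d-1)^5)`: an integer
inequality that is nearly sharp at `d = 3` and has a large margin for `d ≥ 4`.
Then `2w + w² < 5w/2 ≤ 1/(d-1)^5`.
-/

lemma add_three_pow_ten_le (k : ℕ) : (k + 3) ^ 10 ≤ 2 ^ (k + 4) * 5 ^ (4 * k + 6) := by
  have hlin : k + 3 ≤ 3 * 2 ^ k := by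
    have := Nat.lt_two_pow_self (n := k)
    omega
  have hexp : 2 ^ (9 * k) ≤ 5 ^ (4 * k) := by
    rw [pow_mul, pow_mul]; exact Nat.pow_le_pow_left (by norm_num) k
  calc (k + 3) ^ 10 ≤ (3 * 2 ^ k) ^ 10 := Nat.pow_le_pow_left hlin 10
    _ = 3 ^ 10 * 2 ^ k * 2 ^ (9 * k) := by ring
    _ ≤ 2 ^ 4 * 5 ^ 6 * 2 ^ k * 5 ^ (4 * k) := by gcongr; norm_num
    _ = 2 ^ (k + 4) * 5 ^ (4 * k + 6) := by ring

lemma five_pow_mul_pow_le_two_pow_mul_pow (n Q : ℕ) (hQ : (5 * (n + 3)) ^ 5 ≤ Q + 1) :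
    5 ^ (n + 3) * (n + 2) ^ (5 * (n + 3)) ≤ 2 ^ (n + 3) * Q ^ (n + 1) := by
  cases n with
  | zero => norm_num at hQ ⊢; omega
  | succ k =>
    have hQ' : (5 * (k + 3)) ^ 5 ≤ Q := by
      have : (5 * (k + 3)) ^ 5 < (5 * (k + 1 + 3)) ^ 5 :=
        Nat.pow_lt_pow_left (by omega) (by norm_num)
      omega
    calc 5 ^ (k + 1 + 3) * (k + 1 + 2) ^ (5 * (k + 1 + 3))
        = 5 ^ (k + 4) * (k + 3) ^ 10 * (k + 3) ^ (5 * (k + 2)) := by ring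
      _ ≤ 5 ^ (k + 4) * (2 ^ (k + 4) * 5 ^ (4 * k + 6)) * (k + 3) ^ (5 * (k + 2)) := by
          gcongr; exact add_three_pow_ten_le k
      _ = 2 ^ (k + 4) * ((5 * (k + 3)) ^ 5) ^ (k + 2) := by
          rw [mul_pow, mul_pow, ← pow_mul, ← pow_mul]; ring
      _ ≤ 2 ^ (k + 1 + 3) * Q ^ (k + 1 + 1) := by gcongr

lemma five_halves_mul_pow_le_pow (d q : ℕ) (hd : 3 ≤ d) (hq : (5 * d) ^ 5 ≤ q) :
    ((5 / 2 : ℝ) * ((d : ℝ) - 1) ^ 5) ^ d ≤ ((q : ℝ) - 1) ^ (d - 2) := by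
  obtain ⟨n, rfl⟩ : ∃ n, d = n + 3 := ⟨d - 3, by omega⟩
  have hq1 : 1 ≤ q := le_trans (Nat.one_le_pow _ _ (by omega)) hq
  have key : ((5 : ℝ) ^ (n + 3) * ((n : ℝ) + 2) ^ (5 * (n + 3))) ≤
      2 ^ (n + 3) * ((q : ℝ) - 1) ^ (n + 1) := by
    have := five_pow_mul_pow_le_two_pow_mul_pow n (q - 1) (by omega)
    exact_mod_cast (by simpa [Nat.cast_sub hq1] using this)
  calc ((5 / 2 : ℝ) * (((n + 3 : ℕ) : ℝ) - 1) ^ 5) ^ (n + 3)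
      = 5 ^ (n + 3) * ((n : ℝ) + 2) ^ (5 * (n + 3)) / 2 ^ (n + 3) := by
        rw [mul_pow, div_pow, ← pow_mul]; push_cast; ring
    _ ≤ ((q : ℝ) - 1) ^ (n + 3 - 2) := by
        rwa [div_le_iff₀' (by positivity)]

lemma inv_pow_le_inv_pow_sq {y t : ℝ} (hy : 0 < y) (hyt : y ^ 2 ≤ t) (k : ℕ) :
    (t ^ k)⁻¹ ≤ ((y ^ k)⁻¹) ^ 2 := by
  rw [inv_pow, ← pow_mul, mul_comm, pow_mul]
  exact inv_anti₀ (by positivity) (pow_le_pow_left₀ (by positivity) hyt k)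

lemma potts_ratio_le {d : ℕ} (hd : 2 ≤ d) {q t : ℝ} (hq : 1 ≤ q) (ht : 1 < t) :
    (t ^ (d + 1) + (q - 2) * t ^ d - (q - 1) * t) / ((t ^ d - t) * (t ^ (d - 1) + q - 1)) ≤
      (t ^ (d - 2))⁻¹ + (q - 1) / t ^ (d - 1) := by
  obtain ⟨n, rfl⟩ : ∃ n, d = n + 2 := ⟨d - 2, by omega⟩
  simp only [show n + 2 - 1 = n + 1 by omega, Nat.add_sub_cancel]
  have htA : t ≤ t ^ (n + 1) := le_self_pow₀ ht.le (by omega)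
  have hA : 0 < t ^ (n + 1) - 1 := by linarith
  have hD : t ^ (n + 2) - t = t * (t ^ (n + 1) - 1) := by ring
  calc (t ^ (n + 2 + 1) + (q - 2) * t ^ (n + 2) - (q - 1) * t) /
        ((t ^ (n + 2) - t) * (t ^ (n + 1) + q - 1))
      ≤ (t + (q - 1)) / (t ^ (n + 1) + (q - 1)) := by
        have hAq : 0 < t ^ (n + 1) + (q - 1) := by positivity
        rw [div_le_div_iff₀ (by rw [hD]; exact mul_pos (mul_pos (by linarith) hA) (by linarith))
          hAq, ← sub_nonneg]
        have hgap := mul_nonneg (mul_nonneg (by linarith : 0 ≤ t) (sub_nonneg.2 htA)) hAq.le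
        convert hgap using 1
        ring
    _ ≤ (t + (q - 1)) / t ^ (n + 1) :=
        div_le_div_of_nonneg_left (by linarith) (by positivity) (by linarith)
    _ = (t ^ n)⁻¹ + (q - 1) / t ^ (n + 1) := by
        field_simp; ring

lemma sqrt_add_potts_ratio_le {d : ℕ} (hd : 2 ≤ d) {q y t : ℝ} (hy : 1 < y)
    (hyq : y ^ d = q - 1) (hyt : y ^ 2 ≤ t) :
    √((t ^ (d - 2))⁻¹) +
        (t ^ (d + 1) + (q - 2) * t ^ d - (q - 1) * t) / ((t ^ d - t) * (t ^ (d - 1) + q - 1)) ≤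
      2 * (y ^ (d - 2))⁻¹ + ((y ^ (d - 2))⁻¹) ^ 2 := by
  have hy0 : 0 < y := by linarith
  have ht : 1 < t := lt_of_lt_of_le (one_lt_pow₀ hy two_ne_zero) hyt
  have hq : 1 ≤ q := by linarith [one_le_pow₀ (n := d) hy.le]
  have hsqrt : √((t ^ (d - 2))⁻¹) ≤ (y ^ (d - 2))⁻¹ := by
    rw [← Real.sqrt_sq (by positivity : 0 ≤ (y ^ (d - 2))⁻¹)]
    exact Real.sqrt_le_sqrt (inv_pow_le_inv_pow_sq hy0 hyt _)
  have hqt : (q - 1) / t ^ (d - 1) ≤ (y ^ (d - 2))⁻¹ := by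
    have hpow : y ^ d * y ^ (d - 2) ≤ t ^ (d - 1) := by
      rw [← pow_add, show d + (d - 2) = 2 * (d - 1) by omega, pow_mul]
      exact pow_le_pow_left₀ (by positivity) hyt _
    rw [← hyq, div_le_iff₀ (by positivity), ← div_eq_inv_mul, le_div_iff₀ (by positivity)]
    exact hpow
  linarith [potts_ratio_le hd hq ht, inv_pow_le_inv_pow_sq hy0 hyt (d - 2)]

lemma two_mul_add_sq_lt_one_div {w c : ℝ} (hc : 1 ≤ c) (hw : 0 < w) (hwc : 5 / 2 * c * w ≤ 1) :
    2 * w + w ^ 2 < 1 / c := by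
  rw [lt_div_iff₀ (by linarith)]
  nlinarith

theorem stmt_9_general (d q : ℕ) (hd : 3 ≤ d) (hq : (5 * d) ^ 5 ≤ q) (t : ℝ)
    (ht : ((q : ℝ) - 1) ^ ((2 : ℝ) / (d : ℝ)) ≤ t) :
    Real.sqrt ((t ^ (d - 2))⁻¹) +
        (t ^ (d + 1) + ((q : ℝ) - 2) * t ^ d - ((q : ℝ) - 1) * t) /
          ((t ^ d - t) * (t ^ (d - 1) + (q : ℝ) - 1)) <
      1 / ((d : ℝ) - 1) ^ 5 := by
  have hq1 : (1 : ℝ) < q - 1 := by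
    have : (5 * 3) ^ 5 ≤ q := le_trans (Nat.pow_le_pow_left (by omega) 5) hq
    have : (3 : ℝ) ≤ q := by exact_mod_cast (by omega : 3 ≤ q)
    linarith
  set y := ((q : ℝ) - 1) ^ ((d : ℝ)⁻¹)
  have hy : 1 < y := Real.one_lt_rpow hq1 (by positivity)
  have hyq : y ^ d = q - 1 := Real.rpow_inv_natCast_pow (by linarith) (by omega)
  have hyt : y ^ 2 ≤ t := by
    rwa [← Real.rpow_natCast, ← Real.rpow_mul (by linarith), Nat.cast_ofNat, inv_mul_eq_div]
  have hd1 : (1 : ℝ) ≤ ((d : ℝ) - 1) ^ 5 := one_le_pow₀ (by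
    have : (3 : ℝ) ≤ d := by exact_mod_cast hd
    linarith)
  have hz : 5 / 2 * ((d : ℝ) - 1) ^ 5 ≤ y ^ (d - 2) := by
    refine le_of_pow_le_pow_left₀ (n := d) (by omega) (by positivity) ?_
    rw [← pow_mul, mul_comm (d - 2), pow_mul, hyq]
    exact five_halves_mul_pow_le_pow d q hd hq
  refine lt_of_le_of_lt (sqrt_add_potts_ratio_le (by omega) hy hyq hyt)
    (two_mul_add_sq_lt_one_div hd1 (by positivity) ?_)
  rwa [mul_inv_le_iff₀ (by positivity), one_mul]

/-- For `d ≥ 3`, `q ≥ (5d)^5` and `β ≥ β_c`, with `t ≥ (q−1)^{2/d}` defined from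
`e^β − 1 = (t−1)(t^{d−1}+q−1)/(t^{d−1}−t)`, `φ̂₁ = t^{−(d−2)}` and
`R = (t^{d+1}+(q−2)t^d−(q−1)t)/((t^d−t)(t^{d−1}+q−1))`, it holds that
`√φ̂₁ + R < 1/(d−1)^5`. -/
theorem stmt_9 (d q : ℕ) (hd : 3 ≤ d) (hq : (5 * d) ^ 5 ≤ q) (β t : ℝ)
    (hβ : Real.log (((q : ℝ) - 2) / (((q : ℝ) - 1) ^ ((1 : ℝ) - 2 / (d : ℝ)) - 1)) ≤ β)
    (ht : ((q : ℝ) - 1) ^ ((2 : ℝ) / (d : ℝ)) ≤ t)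
    (hβt : Real.exp β - 1 = (t - 1) * (t ^ (d - 1) + (q : ℝ) - 1) / (t ^ (d - 1) - t)) :
    Real.sqrt ((t ^ (d - 2))⁻¹) +
        (t ^ (d + 1) + ((q : ℝ) - 2) * t ^ d - ((q : ℝ) - 1) * t) /
          ((t ^ d - t) * (t ^ (d - 1) + (q : ℝ) - 1)) <
      1 / ((d : ℝ) - 1) ^ 5 :=
  stmt_9_general d q hd hq t ht
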